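/- arXiv:1402.0562 — 2 statements merged into one kernel-verified Lean document; each statement's English description precedes it below -/
import Mathlib

section
/- For every episode k with 1 ≤ k ≤ K and every integer t ≥ 1, the residual ε_t^k satisfies |ε_t^k| ≤ 2Γ + 1 almost surely, and E[ε_t^k | F_{t−1}] = 0 almost surely; that is, (ε_t^k) is a bounded martingale difference sequence. -/
/-!
The residual is one increment of the Doob martingale `t ↦ E[X | F_t]` of the episode sum `X`,
so its conditional mean vanishes by the tower property. For the bound, split `X` at time `t`:
the rewards before `t` are `F_{t-1}`-measurable and cancel, the reward at `t` lies in `[0, 1]`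
and moves the prediction by at most `1`, and by the mixing property (applied at the first index
after `t` and conditioned further down) both predictions of the rewards after `t` lie within `Γ`
of `f` times their number, which contributes at most `2Γ`.
-/

open MeasureTheory Finset

theorem Finset.sum_Ico_split_around {M : Type*} [AddCommMonoid M] (g : ℕ → M) (a b t : ℕ) :
    ∑ i ∈ Ico a b, g i =
      ∑ i ∈ Ico a b with i < t, g i + (if t ∈ Ico a b then g t else 0) +
        ∑ i ∈ Ico (max a (t + 1)) b, g i := by
  rw [← sum_filter_add_sum_filter_not (Ico a b) (· < t),
    ← sum_filter_add_sum_filter_not ((Ico a b).filter (¬ · < t)) (· = t), add_assoc]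
  congr 2
  · rw [filter_filter, filter_congr (q := (· = t)) fun i _ => by omega, sum_filter, sum_ite_eq']
  · congr 1
    ext i
    simp only [mem_filter, mem_Ico, max_le_iff]
    omega

section CondExp

variable {Ω : Type*} {m m₁ m₂ m0 : MeasurableSpace Ω} {μ : Measure Ω} [IsFiniteMeasure μ]

theorem ae_condExp_mem_Icc (hm : m ≤ m0) {g : Ω → ℝ} (hg : Integrable g μ) {a b : ℝ}
    (h : ∀ᵐ ω ∂μ, g ω ∈ Set.Icc a b) : ∀ᵐ ω ∂μ, μ[g | m] ω ∈ Set.Icc a b := by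
  have hlo : μ[fun _ => a | m] ≤ᵐ[μ] μ[g | m] :=
    condExp_mono (integrable_const a) hg (h.mono fun _ hω => hω.1)
  have hhi : μ[g | m] ≤ᵐ[μ] μ[fun _ => b | m] :=
    condExp_mono hg (integrable_const b) (h.mono fun _ hω => hω.2)
  rw [condExp_const hm] at hlo hhi
  filter_upwards [hlo, hhi] with ω using And.intro

theorem ae_abs_condExp_sub_le (hm : m ≤ m0) {g : Ω → ℝ} (hg : Integrable g μ) {c Γ : ℝ}
    (h : ∀ᵐ ω ∂μ, |g ω - c| ≤ Γ) : ∀ᵐ ω ∂μ, |μ[g | m] ω - c| ≤ Γ := by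
  simp only [abs_sub_comm _ c, Set.mem_Icc_iff_abs_le] at h ⊢
  exact ae_condExp_mem_Icc hm hg h

theorem ae_abs_condExp_sub_le_of_le (hm₁₂ : m₁ ≤ m₂) (hm₂ : m₂ ≤ m0) {g : Ω → ℝ} {c Γ : ℝ}
    (h : ∀ᵐ ω ∂μ, |μ[g | m₂] ω - c| ≤ Γ) : ∀ᵐ ω ∂μ, |μ[g | m₁] ω - c| ≤ Γ := by
  filter_upwards [ae_abs_condExp_sub_le (hm₁₂.trans hm₂) integrable_condExp h,
    condExp_condExp_of_le (f := g) hm₁₂ hm₂] with ω hω htower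
  rwa [← htower]

theorem ae_abs_condExp_add_add_sub_condExp_le (hm₁₂ : m₁ ≤ m₂) (hm₂ : m₂ ≤ m0)
    {P Z Y : Ω → ℝ} {c Γ : ℝ} (hP : StronglyMeasurable[m₁] P) (hP_int : Integrable P μ)
    (hZ : StronglyMeasurable[m₂] Z) (hZ_mem : ∀ᵐ ω ∂μ, Z ω ∈ Set.Icc 0 1)
    (hY_int : Integrable Y μ) (hY : ∀ᵐ ω ∂μ, |μ[Y | m₂] ω - c| ≤ Γ) :
    ∀ᵐ ω ∂μ, |μ[P + Z + Y | m₂] ω - μ[P + Z + Y | m₁] ω| ≤ 2 * Γ + 1 := by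
  have hZ_int : Integrable Z μ :=
    Integrable.of_mem_Icc 0 1 (hZ.mono hm₂).measurable.aemeasurable hZ_mem
  have hm₁ : m₁ ≤ m0 := hm₁₂.trans hm₂
  have h₂ : μ[P + Z + Y | m₂] =ᵐ[μ] P + Z + μ[Y | m₂] := by
    filter_upwards [condExp_add (hP_int.add hZ_int) hY_int m₂] with ω hω
    rw [hω, Pi.add_apply, condExp_of_stronglyMeasurable hm₂ ((hP.mono hm₁₂).add hZ)
      (hP_int.add hZ_int)]
    rfl
  have h₁ : μ[P + Z + Y | m₁] =ᵐ[μ] P + μ[Z | m₁] + μ[Y | m₁] := by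
    filter_upwards [condExp_add (hP_int.add hZ_int) hY_int m₁,
      condExp_add hP_int hZ_int m₁] with ω hω hPZ
    rw [hω, Pi.add_apply, hPZ, Pi.add_apply, condExp_of_stronglyMeasurable hm₁ hP hP_int]
    rfl
  filter_upwards [h₁, h₂, hY, ae_abs_condExp_sub_le_of_le hm₁₂ hm₂ hY,
    ae_condExp_mem_Icc hm₁ hZ_int hZ_mem, hZ_mem] with ω e₁ e₂ hY₂ hY₁ hZ₁ hZ₂
  rw [e₁, e₂]
  simp only [Pi.add_apply]
  rw [abs_le] at hY₁ hY₂ ⊢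
  constructor <;> linarith [hZ₁.1, hZ₁.2, hZ₂.1, hZ₂.2]

end CondExp

theorem MeasureTheory.Martingale.condExp_sub_ae_eq_zero {Ω E ι : Type*} {m0 : MeasurableSpace Ω}
    {μ : Measure Ω} [NormedAddCommGroup E] [NormedSpace ℝ E] [CompleteSpace E] [Preorder ι]
    {ℱ : Filtration ι m0} [SigmaFiniteFiltration μ ℱ] {g : ι → Ω → E}
    (hg : Martingale g ℱ μ) {i j : ι} (hij : i ≤ j) : μ[g j - g i | ℱ i] =ᵐ[μ] 0 := by
  filter_upwards [condExp_sub (hg.integrable j) (hg.integrable i) (ℱ i),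
    hg.condExp_ae_eq hij] with ω hω hj
  rw [hω, Pi.sub_apply, hj, condExp_of_stronglyMeasurable (ℱ.le i) (hg.stronglyMeasurable i)
    (hg.integrable i), sub_self, Pi.zero_apply]

def HasMixingBound {Ω : Type*} {m0 : MeasurableSpace Ω} (μ : Measure Ω) (F : Filtration ℕ m0)
    (r : ℕ → Ω → ℝ) (f Γ : ℝ) : Prop :=
  ∀ s S : ℕ, 1 ≤ s → s ≤ S →
    ∀ᵐ ω ∂μ, |μ[fun ω' => ∑ t' ∈ Icc s S, (r t' ω' - f) | F (s - 1)] ω| ≤ Γ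

section Rewards

variable {Ω : Type*} {m0 : MeasurableSpace Ω} {μ : Measure Ω} [IsFiniteMeasure μ]
  {F : Filtration ℕ m0} {r : ℕ → Ω → ℝ} {f Γ : ℝ}

theorem ae_abs_condExp_sum_Ico_sub_le (hΓ : 0 ≤ Γ) (hr_int : ∀ i, Integrable (r i) μ)
    (hmix : HasMixingBound μ F r f Γ)
    {s c i : ℕ} (hi : i < s) :
    ∀ᵐ ω ∂μ, |μ[fun ω' => ∑ j ∈ Ico s c, r j ω' | F i] ω - f * (c - s : ℕ)| ≤ Γ := by
  rcases le_or_gt c s with hcs | hsc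
  · simp [Ico_eq_empty_of_le hcs, Nat.sub_eq_zero_of_le hcs, hΓ]
  refine ae_abs_condExp_sub_le_of_le (F.mono (by omega : i ≤ s - 1)) (F.le _) ?_
  have hIcc : Icc s (c - 1) = Ico s c := by
    ext j
    simp only [mem_Icc, mem_Ico]
    omega
  have hcentered : (fun ω' => ∑ j ∈ Ico s c, (r j ω' - f)) =
      (fun ω' => ∑ j ∈ Ico s c, r j ω') - fun _ => f * (c - s : ℕ) := by
    ext ω'
    simp [sum_sub_distrib, mul_comm]
  have hmix_s := hmix s (c - 1) (by omega) (by omega)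
  rw [hIcc, hcentered] at hmix_s
  filter_upwards [hmix_s, condExp_sub (integrable_finsetSum _ fun j _ => hr_int j)
    (integrable_const _) (F (s - 1))] with ω hω hsub
  rwa [hsub, Pi.sub_apply, condExp_const (F.le _)] at hω

theorem ae_abs_condExp_sum_Ico_sub_condExp_le (hΓ : 0 ≤ Γ) (hr : Adapted F r)
    (hr_bdd : ∀ t ω, r t ω ∈ Set.Icc (0 : ℝ) 1)
    (hmix : HasMixingBound μ F r f Γ)
    (a b : ℕ) {t : ℕ} (ht : 1 ≤ t) :
    ∀ᵐ ω ∂μ, |μ[fun ω' => ∑ j ∈ Ico a b, r j ω' | F t] ω -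
      μ[fun ω' => ∑ j ∈ Ico a b, r j ω' | F (t - 1)] ω| ≤ 2 * Γ + 1 := by
  have hr_int : ∀ i, Integrable (r i) μ := fun i =>
    Integrable.of_mem_Icc 0 1 ((hr i).mono (F.le i) le_rfl).aemeasurable (ae_of_all _ (hr_bdd i))
  have hsplit : (fun ω' => ∑ j ∈ Ico a b, r j ω') =
      (fun ω' => ∑ j ∈ Ico a b with j < t, r j ω') + (if t ∈ Ico a b then r t else 0) +
        fun ω' => ∑ j ∈ Ico (max a (t + 1)) b, r j ω' := by
    ext ω'
    by_cases htab : t ∈ Ico a b <;>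
      simp only [sum_Ico_split_around _ a b t, htab, if_true, if_false, Pi.add_apply, Pi.zero_apply]
  rw [hsplit]
  refine ae_abs_condExp_add_add_sub_condExp_le (F.mono (Nat.sub_le t 1)) (F.le t) ?_
    (integrable_finsetSum _ fun j _ => hr_int j) ?_ ?_ (integrable_finsetSum _ fun j _ => hr_int j)
    (ae_abs_condExp_sum_Ico_sub_le hΓ hr_int hmix (by omega : t < max a (t + 1)))
  · refine (Finset.measurable_sum _ fun j hj => (hr j).mono (F.mono ?_) le_rfl).stronglyMeasurable
    have := (mem_filter.1 hj).2
    omega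
  · split_ifs
    exacts [(hr t).stronglyMeasurable, stronglyMeasurable_const]
  · refine ae_of_all _ fun ω => ?_
    split_ifs
    exacts [hr_bdd t ω, ⟨le_rfl, zero_le_one⟩]

end Rewards

theorem hct_residual_bounded_mds_general
    {Ω : Type*} {m0 : MeasurableSpace Ω} (μ : Measure Ω) [IsProbabilityMeasure μ]
    (F : Filtration ℕ m0) (r : ℕ → Ω → ℝ)
    (hr_adapted : Adapted F r)
    (hr_bdd : ∀ t ω, r t ω ∈ Set.Icc (0 : ℝ) 1)
    (f Γ : ℝ) (hΓ : 0 ≤ Γ)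
    (hmix : ∀ s S : ℕ, 1 ≤ s → s ≤ S →
      ∀ᵐ ω ∂μ,
        |(μ[(fun ω' => ∑ t' ∈ Finset.Icc s S, (r t' ω' - f)) | F (s - 1)]) ω| ≤ Γ)
    (K : ℕ) (tk L : ℕ → ℕ)
    (M : ℕ → ℕ → Ω → ℝ)
    (hM : ∀ k t, M k t =
      μ[(fun ω' => ∑ t' ∈ Finset.Ico (tk k) (tk k + L k), r t' ω') | F t])
    (ε : ℕ → ℕ → Ω → ℝ)
    (hε : ∀ k t, ε k t = M k t - M k (t - 1)) :
    ∀ k, 1 ≤ k → k ≤ K → ∀ t, 1 ≤ t →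
      (∀ᵐ ω ∂μ, |ε k t ω| ≤ 2 * Γ + 1) ∧ (μ[ε k t | F (t - 1)] =ᵐ[μ] 0) := by
  intro k _ _ t ht
  have hMk : M k = fun t =>
      μ[(fun ω' => ∑ t' ∈ Finset.Ico (tk k) (tk k + L k), r t' ω') | F t] := funext (hM k)
  refine ⟨?_, ?_⟩
  · simpa only [hε, hMk, Pi.sub_apply] using
      ae_abs_condExp_sum_Ico_sub_condExp_le hΓ hr_adapted hr_bdd hmix (tk k) (tk k + L k) ht
  · rw [hε, hMk]
    exact (martingale_condExp _ F μ).condExp_sub_ae_eq_zero (Nat.sub_le t 1)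

/-- Lemma `martingale.residual`.
With rewards `r` adapted to a filtration `F`, taking values in `[0,1]`, satisfying the
`Γ`-mixing property with mean `f`, episodes `k = 1, …, K` starting at `tk k` of length
`L k ≥ 1`, disjoint and ordered, `M k t = E[∑_{t'=tk k}^{tk k + L k − 1} r_{t'} | F t]`
and `ε k t = M k t − M k (t−1)`: for every episode `1 ≤ k ≤ K` and every `t ≥ 1`,
`|ε k t| ≤ 2Γ + 1` a.s. and `E[ε k t | F (t−1)] = 0` a.s. -/
theorem hct_residual_bounded_mds
    {Ω : Type*} {m0 : MeasurableSpace Ω} (μ : Measure Ω) [IsProbabilityMeasure μ]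
    (F : Filtration ℕ m0) (r : ℕ → Ω → ℝ)
    (hr_adapted : Adapted F r)
    (hr_bdd : ∀ t ω, r t ω ∈ Set.Icc (0 : ℝ) 1)
    (f Γ : ℝ) (hΓ : 0 ≤ Γ)
    (hmix : ∀ s S : ℕ, 1 ≤ s → s ≤ S →
      ∀ᵐ ω ∂μ,
        |(μ[(fun ω' => ∑ t' ∈ Finset.Icc s S, (r t' ω' - f)) | F (s - 1)]) ω| ≤ Γ)
    (K : ℕ) (tk L : ℕ → ℕ)
    (htk : ∀ k, 1 ≤ tk k) (hL : ∀ k, 1 ≤ L k)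
    (hsep : ∀ k, tk k + L k ≤ tk (k + 1))
    (M : ℕ → ℕ → Ω → ℝ)
    (hM : ∀ k t, M k t =
      μ[(fun ω' => ∑ t' ∈ Finset.Ico (tk k) (tk k + L k), r t' ω') | F t])
    (ε : ℕ → ℕ → Ω → ℝ)
    (hε : ∀ k t, ε k t = M k t - M k (t - 1)) :
    ∀ k, 1 ≤ k → k ≤ K → ∀ t, 1 ≤ t →
      (∀ᵐ ω ∂μ, |ε k t ω| ≤ 2 * Γ + 1) ∧ (μ[ε k t | F (t - 1)] =ᵐ[μ] 0) :=
  hct_residual_bounded_mds_general μ F r hr_adapted hr_bdd f Γ hΓ hmix K tk L M hM ε hε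
end

section
/- (Concentration inequality for non-iid episodic random variables.) For every δ ∈ (0,1), with probability at least 1 − δ, | (1/T) Σ_{k=1}^{K} Σ_{t=t_k}^{t_k+L_k−1} r_t − f | ≤ (2Γ+1) √(2 log(2/δ) / T) + K Γ / T, where T = Σ_{k=1}^K L_k is the total number of samples across all episodes. -/
/-!
Within episode `k` let `S_k = ∑_{t ∈ episode k} (r t - f)` and telescope the Doob martingale
`t ↦ E[S_k | F t]` across the episode: `S_k = E[S_k | F (t_k - 1)] + ∑_t D_t`. The mixing
property bounds the first term by `Γ`. Each increment `D_t` has range at most `2Γ + 1`, since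
given `F (t - 1)` only the present reward (range `1`) and the conditional mean of the rest of
the episode (range `2Γ`, again by mixing) are unknown. The increments of all episodes form a
single martingale difference sequence of length `T`, so by the conditional Hoeffding lemma their
sum is sub-Gaussian with variance proxy `T (2Γ + 1)²`; a two-sided Chernoff bound at level `δ`
together with the `K` terms of size `Γ` gives the claim.
-/

open MeasureTheory ProbabilityTheory Finset Real
open scoped NNReal

section DoobIncrement

variable {Ω : Type*} {m0 : MeasurableSpace Ω} {μ : Measure Ω} {F : Filtration ℕ m0}
  {Y U V : Ω → ℝ} {t : ℕ}

/-- The increment at time `t` of the Doob martingale `s ↦ μ[Y | F s]`; it is `0` at `t = 0`,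
where `t - 1 = 0` in `ℕ`. -/
noncomputable def condExpIncrement (μ : Measure Ω) (F : Filtration ℕ m0) (Y : Ω → ℝ) (t : ℕ) :
    Ω → ℝ :=
  μ[Y|F t] - μ[Y|F (t - 1)]

lemma stronglyMeasurable_condExpIncrement :
    StronglyMeasurable[F t] (condExpIncrement μ F Y t) :=
  stronglyMeasurable_condExp.sub (stronglyMeasurable_condExp.mono (F.mono (Nat.sub_le t 1)))

lemma sum_condExpIncrement_Ico {a b : ℕ} (hab : a ≤ b) :
    ∑ t ∈ Ico a b, condExpIncrement μ F Y t = μ[Y|F (b - 1)] - μ[Y|F (a - 1)] := by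
  induction b, hab using Nat.le_induction with
  | base => simp
  | succ b hab ih =>
    rw [sum_Ico_succ_top hab, ih, condExpIncrement, Nat.add_sub_cancel]
    abel

variable [IsFiniteMeasure μ]

lemma condExp_condExpIncrement : μ[condExpIncrement μ F Y t|F (t - 1)] =ᵐ[μ] 0 := by
  have hle : F (t - 1) ≤ F t := F.mono (Nat.sub_le t 1)
  filter_upwards [condExp_sub (m := F (t - 1)) (integrable_condExp (f := Y) (m := F t))
      (integrable_condExp (f := Y) (m := F (t - 1))),
    condExp_condExp_of_le (f := Y) (μ := μ) hle (F.le t)] with ω hsub htower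
  rw [condExpIncrement, hsub, Pi.sub_apply, htower,
    condExp_of_stronglyMeasurable (F.le _) stronglyMeasurable_condExp integrable_condExp]
  simp

lemma condExpIncrement_add_of_stronglyMeasurable (hU : StronglyMeasurable[F (t - 1)] U)
    (hUi : Integrable U μ) (hVi : Integrable V μ) :
    condExpIncrement μ F (U + V) t =ᵐ[μ] condExpIncrement μ F V t := by
  have hU' : StronglyMeasurable[F t] U := hU.mono (F.mono (Nat.sub_le t 1))
  filter_upwards [condExp_add hUi hVi (F t), condExp_add hUi hVi (F (t - 1))] with ω h h'
  simp only [condExpIncrement, Pi.sub_apply, h, h', Pi.add_apply,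
    condExp_of_stronglyMeasurable (F.le _) hU hUi, condExp_of_stronglyMeasurable (F.le _) hU' hUi]
  ring

lemma ae_mem_Icc_condExp {m : MeasurableSpace Ω} (hm : m ≤ m0) {a b : ℝ} (hY : Integrable Y μ)
    (h : ∀ᵐ ω ∂μ, Y ω ∈ Set.Icc a b) : ∀ᵐ ω ∂μ, μ[Y|m] ω ∈ Set.Icc a b := by
  have hlo := condExp_mono (m := m) (integrable_const a) hY (h.mono fun _ hω => hω.1)
  have hhi := condExp_mono (m := m) hY (integrable_const b) (h.mono fun _ hω => hω.2)
  rw [condExp_const hm] at hlo hhi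
  filter_upwards [hlo, hhi] with ω h1 h2 using ⟨h1, h2⟩

lemma abs_condExpIncrement_le {a b : ℝ} (h : ∀ᵐ ω ∂μ, μ[Y|F t] ω ∈ Set.Icc a b) :
    ∀ᵐ ω ∂μ, |condExpIncrement μ F Y t ω| ≤ b - a := by
  filter_upwards [h, ae_mem_Icc_condExp (F.le (t - 1)) integrable_condExp h,
    condExp_condExp_of_le (f := Y) (μ := μ) (F.mono (Nat.sub_le t 1)) (F.le t)]
    with ω ⟨h1, h2⟩ ⟨h3, h4⟩ htower
  rw [htower] at h3 h4
  rw [condExpIncrement, Pi.sub_apply, abs_le]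
  constructor <;> linarith

end DoobIncrement

lemma exp_mul_le_cosh_add {l c y : ℝ} (hy : |y| ≤ c) :
    exp (l * y) ≤ cosh (l * c) + sinh (l * c) / c * y := by
  rcases (abs_nonneg y).trans hy |>.eq_or_lt with rfl | hc
  · simp [abs_nonpos_iff.mp hy]
  have hconv := convexOn_exp.2 (Set.mem_univ (-(l * c))) (Set.mem_univ (l * c))
    (div_nonneg (by linarith [le_abs_self y]) (by positivity) : 0 ≤ (c - y) / (2 * c))
    (div_nonneg (by linarith [neg_abs_le y]) (by positivity) : 0 ≤ (c + y) / (2 * c))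
    (by field_simp; ring)
  simp only [smul_eq_mul] at hconv
  rw [show (c - y) / (2 * c) * -(l * c) + (c + y) / (2 * c) * (l * c) = l * y by
    field_simp; ring] at hconv
  refine hconv.trans_eq ?_
  simp only [cosh_eq, sinh_eq]
  field_simp
  ring

namespace ProbabilityTheory

variable {Ω : Type*} {m m0 : MeasurableSpace Ω} {μ : Measure Ω}

lemma HasSubgaussianMGF.measure_abs_ge_le {X : Ω → ℝ} {c : ℝ≥0} (h : HasSubgaussianMGF X c μ)
    {ε : ℝ} (hε : 0 ≤ ε) : μ.real {ω | ε ≤ |X ω|} ≤ 2 * exp (-ε ^ 2 / (2 * c)) := by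
  have hsplit : {ω | ε ≤ |X ω|} = {ω | ε ≤ X ω} ∪ {ω | ε ≤ (-X) ω} := by
    ext ω; simp [le_abs', le_neg, or_comm]
  rw [hsplit, two_mul]
  exact (measureReal_union_le _ _).trans
    (add_le_add (h.measure_ge_le hε) (h.neg.measure_ge_le hε))

section Conditional

variable [IsFiniteMeasure μ]

lemma condExp_exp_mul_le {D : Ω → ℝ} {c : ℝ} (hm : m ≤ m0) (hD : AEStronglyMeasurable D μ)
    (hbdd : ∀ᵐ ω ∂μ, |D ω| ≤ c) (h0 : μ[D|m] =ᵐ[μ] 0) (l : ℝ) :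
    μ[fun ω => exp (l * D ω)|m] ≤ᵐ[μ] fun _ => exp (c ^ 2 * l ^ 2 / 2) := by
  have hIcc : ∀ᵐ ω ∂μ, D ω ∈ Set.Icc (-c) c := hbdd.mono fun _ h => abs_le.mp h
  have hDi : Integrable D μ := Integrable.of_mem_Icc _ _ hD.aemeasurable hIcc
  set A := cosh (l * c)
  set B := sinh (l * c) / c
  have hchord : μ[fun ω => exp (l * D ω)|m] ≤ᵐ[μ] μ[(fun _ => A) + B • D|m] :=
    condExp_mono (integrable_exp_mul_of_mem_Icc hD.aemeasurable hIcc)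
      ((integrable_const A).add (hDi.smul B)) (hbdd.mono fun _ h => exp_mul_le_cosh_add h)
  have hchord_eq : μ[(fun _ => A) + B • D|m] =ᵐ[μ] fun _ => A := by
    filter_upwards [condExp_add (m := m) (integrable_const A) (hDi.smul B),
      condExp_smul (m := m) (μ := μ) B D, h0] with ω hadd hsmul hzero
    simp [hadd, hsmul, hzero, condExp_const hm]
  filter_upwards [hchord, hchord_eq] with ω h₁ h₂
  exact (h₁.trans_eq h₂).trans ((cosh_le_exp_half_sq _).trans_eq (by ring_nf))

lemma HasSubgaussianMGF.add_of_condExp_eq_zero {G D : Ω → ℝ} {cG c : ℝ≥0} (hm : m ≤ m0)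
    (hG : HasSubgaussianMGF G cG μ) (hGm : StronglyMeasurable[m] G)
    (hD : AEStronglyMeasurable D μ) (hbdd : ∀ᵐ ω ∂μ, |D ω| ≤ c) (h0 : μ[D|m] =ᵐ[μ] 0) :
    HasSubgaussianMGF (G + D) (cG + c ^ 2) μ := by
  have hexpD (l : ℝ) : Integrable (fun ω => exp (l * D ω)) μ :=
    integrable_exp_mul_of_mem_Icc hD.aemeasurable (hbdd.mono fun _ h => abs_le.mp h)
  have hexpG_meas (l : ℝ) : StronglyMeasurable[m] fun ω => exp (l * G ω) :=
    (continuous_exp.comp (continuous_const.mul continuous_id)).comp_stronglyMeasurable hGm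
  have hprod (l : ℝ) : Integrable ((fun ω => exp (l * G ω)) * fun ω => exp (l * D ω)) μ :=
    (hG.integrable_exp_mul l).mul_bdd (hexpD l).aestronglyMeasurable
      (c := exp (|l| * c)) (hbdd.mono fun ω h => by
        rw [norm_of_nonneg (exp_pos _).le, exp_le_exp]
        exact (le_abs_self _).trans (by rw [abs_mul]; gcongr))
  have hsplit (l : ℝ) : (fun ω => exp (l * (G + D) ω)) =
      (fun ω => exp (l * G ω)) * fun ω => exp (l * D ω) := by
    ext ω; simp [mul_add, exp_add]
  refine ⟨fun l => hsplit l ▸ hprod l, fun l => ?_⟩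
  calc mgf (G + D) μ l
      = ∫ ω, μ[(fun ω => exp (l * G ω)) * fun ω => exp (l * D ω)|m] ω ∂μ := by
        rw [mgf, hsplit, integral_condExp hm]
    _ ≤ ∫ ω, exp (l * G ω) * exp (c ^ 2 * l ^ 2 / 2) ∂μ := by
        refine integral_mono_ae integrable_condExp ((hG.integrable_exp_mul l).mul_const _) ?_
        filter_upwards [condExp_mul_of_stronglyMeasurable_left (hexpG_meas l) (hprod l) (hexpD l),
          condExp_exp_mul_le hm hD hbdd h0 l] with ω hpull hle
        rw [hpull, Pi.mul_apply]
        gcongr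
    _ = mgf G μ l * exp (c ^ 2 * l ^ 2 / 2) := integral_mul_const _ _
    _ ≤ exp (cG * l ^ 2 / 2) * exp (c ^ 2 * l ^ 2 / 2) := by gcongr; exact hG.mgf_le l
    _ = exp (↑(cG + c ^ 2) * l ^ 2 / 2) := by rw [← exp_add]; push_cast; ring_nf

end Conditional

section Martingale

variable [IsProbabilityMeasure μ] {F : Filtration ℕ m0}

lemma hasSubgaussianMGF_sum_of_condExp_eq_zero {D : ℕ → Ω → ℝ} {c : ℝ≥0} (s : Finset ℕ)
    (hD : ∀ t ∈ s, StronglyMeasurable[F t] (D t)) (hbdd : ∀ t ∈ s, ∀ᵐ ω ∂μ, |D t ω| ≤ c)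
    (h0 : ∀ t ∈ s, μ[D t|F (t - 1)] =ᵐ[μ] 0) :
    HasSubgaussianMGF (fun ω => ∑ t ∈ s, D t ω) (#s * c ^ 2) μ := by
  induction s using Finset.induction_on_max with
  | empty => simp
  | insert a s hlt ih =>
    have ha : a ∉ s := fun h => (hlt a h).false
    simp only [forall_mem_insert] at hD hbdd h0
    have hpast : StronglyMeasurable[F (a - 1)] fun ω => ∑ t ∈ s, D t ω :=
      Finset.stronglyMeasurable_fun_sum _ fun t ht =>
        (hD.2 t ht).mono (F.mono (Nat.le_sub_one_of_lt (hlt t ht)))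
    have := (ih hD.2 hbdd.2 h0.2).add_of_condExp_eq_zero (F.le (a - 1)) hpast
      (hD.1.mono (F.le a)).aestronglyMeasurable hbdd.1 h0.1
    convert this using 1
    · ext ω; simp [sum_insert ha, add_comm]
    · rw [card_insert_of_notMem ha]; push_cast; ring

lemma hasSubgaussianMGF_sum_sum_of_pairwiseDisjoint {ι : Type*} [DecidableEq ι]
    {X : ι → ℕ → Ω → ℝ} {c : ℝ≥0} (I : Finset ι) (s : ι → Finset ℕ)
    (hs : (I : Set ι).PairwiseDisjoint s)
    (hX : ∀ i ∈ I, ∀ t ∈ s i, StronglyMeasurable[F t] (X i t))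
    (hbdd : ∀ i ∈ I, ∀ t ∈ s i, ∀ᵐ ω ∂μ, |X i t ω| ≤ c)
    (h0 : ∀ i ∈ I, ∀ t ∈ s i, μ[X i t|F (t - 1)] =ᵐ[μ] 0) :
    HasSubgaussianMGF (fun ω => ∑ i ∈ I, ∑ t ∈ s i, X i t ω) ((∑ i ∈ I, #(s i)) * c ^ 2) μ := by
  set D : ℕ → Ω → ℝ := fun t ω => ∑ i ∈ I, if t ∈ s i then X i t ω else 0
  have hD : ∀ i ∈ I, ∀ t ∈ s i, D t = X i t := fun i hi t ht => by
    ext ω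
    refine (sum_eq_single_of_mem i hi fun j hj hji => ?_).trans (if_pos ht)
    exact if_neg fun htj => disjoint_left.mp (hs hj hi hji) htj ht
  have hsum : (fun ω => ∑ i ∈ I, ∑ t ∈ s i, X i t ω) = fun ω => ∑ t ∈ I.biUnion s, D t ω := by
    ext ω
    rw [sum_comm]
    refine sum_congr rfl fun i hi => ?_
    rw [sum_ite_mem, inter_eq_right.mpr (subset_biUnion_of_mem s hi)]
  rw [hsum, ← card_biUnion hs]
  refine hasSubgaussianMGF_sum_of_condExp_eq_zero (F := F) _ ?_ ?_ ?_
  all_goals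
    intro t ht
    obtain ⟨i, hi, hti⟩ := mem_biUnion.mp ht
    rw [hD i hi t hti]
  exacts [hX i hi t hti, hbdd i hi t hti, h0 i hi t hti]

end Martingale

end ProbabilityTheory

section Episodes

variable {Ω : Type*} {m0 : MeasurableSpace Ω} {μ : Measure Ω} {F : Filtration ℕ m0}
  {r : ℕ → Ω → ℝ} {f Γ : ℝ}

def IsMixing (μ : Measure Ω) (F : Filtration ℕ m0) (r : ℕ → Ω → ℝ) (f Γ : ℝ) : Prop :=
  ∀ s S : ℕ, 1 ≤ s → s ≤ S →
    ∀ᵐ ω ∂μ, |(μ[(fun ω' => ∑ t' ∈ Finset.Icc s S, (r t' ω' - f)) | F (s - 1)]) ω| ≤ Γ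

noncomputable def blockDeviation (r : ℕ → Ω → ℝ) (f : ℝ) (a b : ℕ) : Ω → ℝ :=
  fun ω => ∑ s ∈ Ico a b, (r s ω - f)

lemma blockDeviation_apply_add (a L : ℕ) (ω : Ω) :
    blockDeviation r f a (a + L) ω = ∑ s ∈ Ico a (a + L), r s ω - L * f := by
  simp [blockDeviation, sum_sub_distrib]

lemma stronglyMeasurable_blockDeviation (hr : Adapted F r) {a b t : ℕ} (hbt : b ≤ t + 1) :
    StronglyMeasurable[F t] (blockDeviation r f a b) :=
  Finset.stronglyMeasurable_fun_sum _ fun s hs =>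
    (((hr s).mono (F.mono (by grind)) le_rfl).sub measurable_const).stronglyMeasurable

lemma abs_condExp_blockDeviation_le (hΓ : 0 ≤ Γ) (hmix : IsMixing μ F r f Γ) {a : ℕ}
    (ha : 1 ≤ a) (b : ℕ) :
    ∀ᵐ ω ∂μ, |μ[blockDeviation r f a b|F (a - 1)] ω| ≤ Γ := by
  rcases lt_or_ge a b with hab | hba
  · have := hmix a (b - 1) ha (by omega)
    rwa [← Ico_add_one_right_eq_Icc, Nat.sub_add_cancel (by omega)] at this
  · have h0 : blockDeviation r f a b = 0 := by
      ext ω; simp [blockDeviation, Ico_eq_empty_of_le hba]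
    simp [h0, condExp_zero, hΓ]

variable [IsFiniteMeasure μ]

lemma MeasureTheory.Adapted.integrable_of_mem_Icc {a b : ℝ} (hr : Adapted F r)
    (hr_bdd : ∀ t ω, r t ω ∈ Set.Icc a b) (t : ℕ) : Integrable (r t) μ :=
  Integrable.of_mem_Icc a b ((hr t).mono (F.le t) le_rfl).aemeasurable
    (Filter.Eventually.of_forall (hr_bdd t))

lemma integrable_blockDeviation (hr : Adapted F r) (hr_bdd : ∀ t ω, r t ω ∈ Set.Icc (0 : ℝ) 1)
    (a b : ℕ) : Integrable (blockDeviation r f a b) μ :=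
  integrable_finsetSum _ fun s _ => (hr.integrable_of_mem_Icc hr_bdd s).sub (integrable_const f)

lemma abs_condExpIncrement_blockDeviation_le (hr : Adapted F r)
    (hr_bdd : ∀ t ω, r t ω ∈ Set.Icc (0 : ℝ) 1) (hΓ : 0 ≤ Γ) (hmix : IsMixing μ F r f Γ)
    {a b t : ℕ} (ht : t ∈ Ico a b) :
    ∀ᵐ ω ∂μ, |condExpIncrement μ F (blockDeviation r f a b) t ω| ≤ 2 * Γ + 1 := by
  obtain ⟨hat, htb⟩ := mem_Ico.mp ht
  have hr_meas : StronglyMeasurable[F t] fun ω => r t ω - f :=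
    ((hr t).sub measurable_const).stronglyMeasurable
  have hr_int : Integrable (fun ω => r t ω - f) μ :=
    (hr.integrable_of_mem_Icc hr_bdd t).sub (integrable_const f)
  have hfuture_int := integrable_blockDeviation (μ := μ) (f := f) hr hr_bdd (t + 1) b
  have hsplit : blockDeviation r f a b =
      blockDeviation r f a t + ((fun ω => r t ω - f) + blockDeviation r f (t + 1) b) := by
    ext ω
    simp only [blockDeviation, Pi.add_apply]
    rw [← sum_eq_sum_Ico_succ_bot htb (fun s => r s ω - f), sum_Ico_consecutive _ hat htb.le]
  have hfuture := abs_condExp_blockDeviation_le hΓ hmix (Nat.le_add_left 1 t) b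
  rw [Nat.add_sub_cancel] at hfuture
  have hpresent : ∀ᵐ ω ∂μ, μ[(fun ω => r t ω - f) + blockDeviation r f (t + 1) b|F t] ω ∈
      Set.Icc (-f - Γ) (1 - f + Γ) := by
    filter_upwards [condExp_add hr_int hfuture_int (F t), hfuture] with ω hadd hfut
    rw [hadd, Pi.add_apply, condExp_of_stronglyMeasurable (F.le t) hr_meas hr_int]
    have := hr_bdd t ω
    constructor <;> linarith [abs_le.mp hfut, this.1, this.2]
  rw [hsplit]
  filter_upwards [condExpIncrement_add_of_stronglyMeasurable
      (stronglyMeasurable_blockDeviation hr (a := a) (b := t) (t := t - 1) (by omega))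
      (integrable_blockDeviation hr hr_bdd _ _) (hr_int.add hfuture_int),
    abs_condExpIncrement_le hpresent] with ω heq hle
  rw [heq]
  linarith

lemma abs_blockDeviation_sub_sum_condExpIncrement_le (hr : Adapted F r)
    (hr_bdd : ∀ t ω, r t ω ∈ Set.Icc (0 : ℝ) 1) (hΓ : 0 ≤ Γ) (hmix : IsMixing μ F r f Γ)
    {a b : ℕ} (ha : 1 ≤ a) (hab : a ≤ b) :
    ∀ᵐ ω ∂μ, |blockDeviation r f a b ω -
      ∑ t ∈ Ico a b, condExpIncrement μ F (blockDeviation r f a b) t ω| ≤ Γ := by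
  have hlast : μ[blockDeviation r f a b|F (b - 1)] = blockDeviation r f a b :=
    condExp_of_stronglyMeasurable (F.le _) (stronglyMeasurable_blockDeviation hr (by omega))
      (integrable_blockDeviation hr hr_bdd a b)
  filter_upwards [abs_condExp_blockDeviation_le hΓ hmix ha b] with ω hω
  rwa [← Finset.sum_apply, sum_condExpIncrement_Ico hab, hlast, Pi.sub_apply, sub_sub_cancel]

lemma pairwiseDisjoint_Ico_of_add_le {tk L : ℕ → ℕ} (hsep : ∀ k, tk k + L k ≤ tk (k + 1))
    (I : Set ℕ) : I.PairwiseDisjoint fun k => Ico (tk k) (tk k + L k) := by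
  have hmono : Monotone tk := monotone_nat_of_le_succ fun k => (Nat.le_add_right _ _).trans (hsep k)
  intro j _ k _ hjk
  have := hmono.pairwise_disjoint_on_Ico_succ hjk
  simp only [Function.onFun, Order.succ_eq_add_one] at this
  rw [Function.onFun, ← disjoint_coe, coe_Ico, coe_Ico]
  exact this.mono (Set.Ico_subset_Ico_right (hsep j)) (Set.Ico_subset_Ico_right (hsep k))

end Episodes

lemma sqrt_two_mul_mul_sq_mul {T σ x : ℝ} (hT : 0 < T) (hσ : 0 ≤ σ) :
    √(2 * (T * σ ^ 2) * x) = T * (σ * √(2 * x / T)) := by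
  rw [show 2 * (T * σ ^ 2) * x = (T * σ) ^ 2 * (2 * x / T) by field_simp,
    sqrt_mul (sq_nonneg _), sqrt_sq (by positivity), mul_assoc]

section Concentration

variable {Ω : Type*} {m0 : MeasurableSpace Ω} {μ : Measure Ω} [IsProbabilityMeasure μ]

theorem exists_hasSubgaussianMGF_abs_sum_blockDeviation_sub_le {F : Filtration ℕ m0}
    {r : ℕ → Ω → ℝ} {f Γ : ℝ} (hr : Adapted F r) (hr_bdd : ∀ t ω, r t ω ∈ Set.Icc (0 : ℝ) 1)
    (hΓ : 0 ≤ Γ) (hmix : IsMixing μ F r f Γ) {ι : Type*} [DecidableEq ι] (I : Finset ι)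
    (tk L : ι → ℕ)
    (hdisj : (I : Set ι).PairwiseDisjoint fun i => Ico (tk i) (tk i + L i))
    (htk : ∀ i ∈ I, 1 ≤ tk i) :
    ∃ M : Ω → ℝ, HasSubgaussianMGF M ((∑ i ∈ I, L i) * (2 * Γ + 1).toNNReal ^ 2) μ ∧
      ∀ᵐ ω ∂μ, |∑ i ∈ I, blockDeviation r f (tk i) (tk i + L i) ω - M ω| ≤ #I * Γ := by
  refine ⟨fun ω => ∑ i ∈ I, ∑ t ∈ Ico (tk i) (tk i + L i),
    condExpIncrement μ F (blockDeviation r f (tk i) (tk i + L i)) t ω, ?_, ?_⟩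
  · simpa using hasSubgaussianMGF_sum_sum_of_pairwiseDisjoint (F := F)
      (X := fun i => condExpIncrement μ F (blockDeviation r f (tk i) (tk i + L i))) I _ hdisj
      (fun i _ t _ => stronglyMeasurable_condExpIncrement)
      (fun i _ t ht => by
        simpa [Real.coe_toNNReal _ (by linarith : 0 ≤ 2 * Γ + 1)] using
          abs_condExpIncrement_blockDeviation_le hr hr_bdd hΓ hmix ht)
      (fun i _ t _ => condExp_condExpIncrement)
  · filter_upwards [(Filter.eventually_all_finset I).mpr fun i hi =>
      abs_blockDeviation_sub_sum_condExpIncrement_le (μ := μ) hr hr_bdd hΓ hmix (htk i hi)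
        (Nat.le_add_right _ _)] with ω hω
    rw [← sum_sub_distrib]
    exact (abs_sum_le_sum_abs _ _).trans ((sum_le_sum hω).trans_eq (by simp))

lemma one_sub_ofReal_le_measure_abs_le {M Y : Ω → ℝ} {v : ℝ≥0} {C δ : ℝ}
    (hM : HasSubgaussianMGF M v μ) (hv : 0 < v) (hYM : ∀ᵐ ω ∂μ, |Y ω - M ω| ≤ C)
    (hδ₀ : 0 < δ) (hδ₂ : δ ≤ 2) :
    1 - ENNReal.ofReal δ ≤ μ {ω | |Y ω| ≤ sqrt (2 * v * log (2 / δ)) + C} := by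
  set ε := sqrt (2 * v * log (2 / δ))
  have hlog : 0 ≤ log (2 / δ) := log_nonneg (by rw [le_div_iff₀ hδ₀]; linarith)
  have htail : μ.real {ω | ε ≤ |M ω|} ≤ δ := by
    refine (hM.measure_abs_ge_le (sqrt_nonneg _)).trans_eq ?_
    rw [sq_sqrt (by positivity), show -(2 * v * log (2 / δ)) / (2 * v) = -log (2 / δ) by
      field_simp, exp_neg, exp_log (by positivity)]
    field_simp
  have hbad : ∀ᵐ ω ∂μ, ¬|Y ω| ≤ ε + C → ε ≤ |M ω| := by
    filter_upwards [hYM] with ω hω hY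
    by_contra! hM
    linarith [abs_sub_abs_le_abs_sub (Y ω) (M ω)]
  rw [tsub_le_iff_right, ← measure_univ (μ := μ)]
  refine (measure_univ_le_add_compl _).trans (add_le_add le_rfl ?_)
  calc μ {ω | |Y ω| ≤ ε + C}ᶜ ≤ μ {ω | ε ≤ |M ω|} := measure_mono_ae (hbad.mono fun _ h => h)
    _ = ENNReal.ofReal (μ.real {ω | ε ≤ |M ω|}) := (ofReal_measureReal).symm
    _ ≤ ENNReal.ofReal δ := ENNReal.ofReal_le_ofReal htail

end Concentration

/-- Lemma `tail.weak.dep`: concentration inequality for non-iid episodic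
random variables.
In the episodic setup (rewards adapted, `[0,1]`-valued, `Γ`-mixing with mean `f`;
disjoint ordered episodes `k = 1, …, K` starting at `tk k` with length `L k ≥ 1`;
`T = ∑_{k=1}^K L k` the total number of samples): for every `δ ∈ (0,1)`,
with probability at least `1 − δ`,
`|(1/T) ∑_{k=1}^{K} ∑_{t=tk k}^{tk k + L k − 1} r t − f| ≤ (2Γ+1)√(2 log(2/δ)/T) + KΓ/T`. -/
theorem hct_episodic_concentration
    {Ω : Type*} {m0 : MeasurableSpace Ω} (μ : Measure Ω) [IsProbabilityMeasure μ]
    (F : Filtration ℕ m0) (r : ℕ → Ω → ℝ)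
    (hr_adapted : Adapted F r)
    (hr_bdd : ∀ t ω, r t ω ∈ Set.Icc (0 : ℝ) 1)
    (f Γ : ℝ) (hΓ : 0 ≤ Γ)
    (hmix : ∀ s S : ℕ, 1 ≤ s → s ≤ S →
      ∀ᵐ ω ∂μ,
        |(μ[(fun ω' => ∑ t' ∈ Finset.Icc s S, (r t' ω' - f)) | F (s - 1)]) ω| ≤ Γ)
    (K : ℕ) (hK : 1 ≤ K) (tk L : ℕ → ℕ)
    (htk : ∀ k, 1 ≤ tk k) (hL : ∀ k, 1 ≤ L k)
    (hsep : ∀ k, tk k + L k ≤ tk (k + 1))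
    (T : ℕ) (hT : T = ∑ k ∈ Finset.Icc 1 K, L k) :
    ∀ δ : ℝ, 0 < δ → δ < 1 →
      1 - ENNReal.ofReal δ ≤
        μ {ω | |(1 / (T : ℝ)) * ∑ k ∈ Finset.Icc 1 K,
                  ∑ t ∈ Finset.Ico (tk k) (tk k + L k), r t ω - f|
                ≤ (2 * Γ + 1) * Real.sqrt (2 * Real.log (2 / δ) / T) + K * Γ / T} := by
  intro δ hδ₀ hδ₁
  have hc : 0 ≤ 2 * Γ + 1 := by linarith
  have hT_pos : (0 : ℝ) < T := by
    have : K ≤ T := hT ▸ by simpa using card_nsmul_le_sum (Icc 1 K) L 1 fun k _ => hL k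
    exact_mod_cast hK.trans this
  obtain ⟨M, hM, hYM⟩ := exists_hasSubgaussianMGF_abs_sum_blockDeviation_sub_le hr_adapted hr_bdd
    hΓ hmix (Icc 1 K) tk L (pairwiseDisjoint_Ico_of_add_le hsep _) fun k _ => htk k
  rw [← hT] at hM
  have hv : 0 < (T : ℝ≥0) * (2 * Γ + 1).toNNReal ^ 2 :=
    mul_pos (by exact_mod_cast hT_pos) (pow_pos (Real.toNNReal_pos.mpr (by linarith)) 2)
  refine (one_sub_ofReal_le_measure_abs_le hM hv hYM hδ₀ (by linarith)).trans
    (measure_mono fun ω hω => ?_)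
  have hmean : 1 / (T : ℝ) * ∑ k ∈ Icc 1 K, ∑ t ∈ Ico (tk k) (tk k + L k), r t ω - f =
      (∑ k ∈ Icc 1 K, blockDeviation r f (tk k) (tk k + L k) ω) / T := by
    simp only [blockDeviation_apply_add, sum_sub_distrib, ← sum_mul]
    rw [← Nat.cast_sum, ← hT]
    field_simp
  simp only [Set.mem_ofPred_eq, NNReal.coe_mul, NNReal.coe_pow, NNReal.coe_natCast,
    Real.coe_toNNReal _ hc, sqrt_two_mul_mul_sq_mul hT_pos hc, Nat.card_Icc,
    Nat.add_sub_cancel] at hω ⊢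
  rw [hmean, abs_div, abs_of_pos hT_pos, div_le_iff₀ hT_pos]
  exact hω.trans_eq (by field_simp)
end
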